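/- For the discrete operators A_h, A_h* on a periodic mesh, the commutator satisfies pointwise ([A_h, A_h*]u)_j = −((E_{j+1} − E_{j−1})/(4Δx_j))(u_{j+1} + u_{j−1}) − ((E_{j+1} − 2E_j + E_{j−1})/(4Δx_j))(u_{j+1} − u_{j−1}). -/

import Mathlib

/-- Discrete centered operator `(A_h u)_j = √T₀[(u_{j+1} − u_{j−1})/(2Δx_j) − (E_j/(2T₀))u_j]`
on a periodic mesh indexed by `ZMod N`. -/
noncomputable def Ah {N : ℕ} (T₀ : ℝ) (Δx E u : ZMod N → ℝ) : ZMod N → ℝ :=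
  fun j => Real.sqrt T₀ * ((u (j + 1) - u (j - 1)) / (2 * Δx j) - E j / (2 * T₀) * u j)

/-- Discrete adjoint operator
`(A_h* u)_j = −√T₀[(u_{j+1} − u_{j−1})/(2Δx_j) + (E_j/(2T₀))u_j]`. -/
noncomputable def AhStar {N : ℕ} (T₀ : ℝ) (Δx E u : ZMod N → ℝ) : ZMod N → ℝ :=
  fun j => -(Real.sqrt T₀ * ((u (j + 1) - u (j - 1)) / (2 * Δx j) + E j / (2 * T₀) * u j))

/-!
Write `D` for the centered difference `(Du)_j = (u_{j+1} − u_{j−1})/(2Δx_j)` and `e` for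
multiplication by `E/(2T₀)`. Then `A_h = √T₀ (D − e)` and `A_h* = −√T₀ (D + e)`, so in the
ring of linear operators `[A_h, A_h*] = −2T₀ [D, e]`. The commutator `[D, e]` is a discrete
Leibniz rule, `([D, e]u)_j = ((e_{j+1} − e_j) u_{j+1} + (e_j − e_{j−1}) u_{j−1})/(2Δx_j)`, and
regrouping it by `u_{j+1} ± u_{j−1}` gives the formula.
-/

theorem lie_smul_sub_neg_smul_add {R A : Type*} [CommRing R] [Ring A] [Algebra R A]
    (s : R) (a b : A) : ⁅s • (a - b), -(s • (a + b))⁆ = -(2 * s ^ 2) • ⁅a, b⁆ := by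
  simp only [Ring.lie_def, mul_neg, neg_mul, smul_mul_smul, sub_mul, mul_sub, add_mul, mul_add]
  module

section CenteredDifference

variable {ι 𝕜 : Type*} [AddGroupWithOne ι] [Field 𝕜]

def centeredDiff (Δx : ι → 𝕜) : Module.End 𝕜 (ι → 𝕜) where
  toFun u j := (u (j + 1) - u (j - 1)) / (2 * Δx j)
  map_add' u v := by ext j; simp only [Pi.add_apply]; ring
  map_smul' c u := by ext j; simp only [Pi.smul_apply, smul_eq_mul, RingHom.id_apply]; ring

@[simp]
theorem centeredDiff_apply (Δx u : ι → 𝕜) (j : ι) :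
    centeredDiff Δx u j = (u (j + 1) - u (j - 1)) / (2 * Δx j) :=
  rfl

theorem lie_centeredDiff_mulLeft_apply (Δx e u : ι → 𝕜) (j : ι) :
    ⁅centeredDiff Δx, LinearMap.mulLeft 𝕜 e⁆ u j =
      ((e (j + 1) - e j) * u (j + 1) + (e j - e (j - 1)) * u (j - 1)) / (2 * Δx j) := by
  simp only [Ring.lie_def, LinearMap.sub_apply, Module.End.mul_apply, LinearMap.mulLeft_apply,
    centeredDiff_apply, Pi.sub_apply, Pi.mul_apply]
  ring

end CenteredDifference

section MeshOperators

variable {N : ℕ} (Δx E : ZMod N → ℝ)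

theorem Ah_eq_smul (T₀ : ℝ) :
    Ah T₀ Δx E = ⇑(√T₀ • (centeredDiff Δx - LinearMap.mulLeft ℝ fun j => E j / (2 * T₀))) :=
  rfl

theorem AhStar_eq_neg_smul (T₀ : ℝ) :
    AhStar T₀ Δx E = ⇑(-(√T₀ • (centeredDiff Δx + LinearMap.mulLeft ℝ fun j => E j / (2 * T₀)))) :=
  rfl

theorem Ah_AhStar_sub_AhStar_Ah {T₀ : ℝ} (hT₀ : 0 ≤ T₀) (u : ZMod N → ℝ) :
    Ah T₀ Δx E (AhStar T₀ Δx E u) - AhStar T₀ Δx E (Ah T₀ Δx E u) =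
      -(2 * T₀) • ⁅centeredDiff Δx, LinearMap.mulLeft ℝ fun j => E j / (2 * T₀)⁆ u := by
  rw [Ah_eq_smul, AhStar_eq_neg_smul, ← Module.End.mul_apply, ← Module.End.mul_apply,
    ← LinearMap.sub_apply, ← Ring.lie_def, lie_smul_sub_neg_smul_add, Real.sq_sqrt hT₀,
    LinearMap.smul_apply]

end MeshOperators

theorem discrete_commutator_formula_general
    {N : ℕ}
    (T₀ : ℝ) (hT₀ : 0 < T₀)
    (Δx : ZMod N → ℝ)
    (E u : ZMod N → ℝ) :
    ∀ j : ZMod N,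
      Ah T₀ Δx E (AhStar T₀ Δx E u) j - AhStar T₀ Δx E (Ah T₀ Δx E u) j
        = -((E (j + 1) - E (j - 1)) / (4 * Δx j)) * (u (j + 1) + u (j - 1))
          - (E (j + 1) - 2 * E j + E (j - 1)) / (4 * Δx j) * (u (j + 1) - u (j - 1)) := by
  intro j
  rw [← Pi.sub_apply, Ah_AhStar_sub_AhStar_Ah Δx E hT₀.le, Pi.smul_apply,
    lie_centeredDiff_mulLeft_apply, smul_eq_mul]
  have hT₀' : T₀ ≠ 0 := hT₀.ne'
  field_simp
  ring

/-- pointwise formula for the discrete commutator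
`[A_h, A_h*] = A_h A_h* − A_h* A_h`:
`([A_h, A_h*]u)_j = −((E_{j+1} − E_{j−1})/(4Δx_j))(u_{j+1} + u_{j−1})
  − ((E_{j+1} − 2E_j + E_{j−1})/(4Δx_j))(u_{j+1} − u_{j−1})`. -/
theorem discrete_commutator_formula
    {N : ℕ} [NeZero N]
    (T₀ : ℝ) (hT₀ : 0 < T₀)
    (Δx : ZMod N → ℝ) (hΔx : ∀ j, 0 < Δx j)
    (E u : ZMod N → ℝ) :
    ∀ j : ZMod N,
      Ah T₀ Δx E (AhStar T₀ Δx E u) j - AhStar T₀ Δx E (Ah T₀ Δx E u) j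
        = -((E (j + 1) - E (j - 1)) / (4 * Δx j)) * (u (j + 1) + u (j - 1))
          - (E (j + 1) - 2 * E j + E (j - 1)) / (4 * Δx j) * (u (j + 1) - u (j - 1)) :=
  discrete_commutator_formula_general T₀ hT₀ Δx E u
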